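/- Let f be a classical solution of the Fokker–Planck equation ∂_t f + ∇·(F f) = (1/2)∇·(σ²∇f) on Q = Ω × (0,T_f) satisfying the no-flux boundary condition H·n̂ = 0 on ∂Ω × (0,T_f), and assume the drift bound |F(x,t)| ≤ N on Ω × (0,T_f). Then the squared L² norm of f satisfies the differential inequality (d/dt) ‖f(·,t)‖²_{L²(Ω)} ≤ ‖σ⁻¹‖₂² N² ‖f(·,t)‖²_{L²(Ω)} for all t ∈ (0,T_f), where ‖σ⁻¹‖₂ = max_j σ_j⁻¹. -/

import Mathlib

open MeasureTheory Set Filter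

noncomputable section

abbrev E4 := EuclideanSpace ℝ (Fin 4)

/-- Spatial partial derivative in the `j`-th coordinate direction. -/
def pd (j : Fin 4) (g : E4 → ℝ) (x : E4) : ℝ :=
  fderiv ℝ g x (EuclideanSpace.single j 1)

/-- The open axis-aligned box `Ω = ∏ (a i, b i) ⊂ ℝ⁴`. -/
def box (a b : Fin 4 → ℝ) : Set E4 := {x | ∀ i, x i ∈ Set.Ioo (a i) (b i)}

/-- `f` is twice continuously differentiable in `x` and once in `t` on `S × I`. -/
structure RegSol (f : E4 → ℝ → ℝ) (S : Set E4) (I : Set ℝ) : Prop where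
  contF : ContinuousOn (fun p : E4 × ℝ => f p.1 p.2) (S ×ˢ I)
  diffX : ∀ t ∈ I, ∀ x ∈ S, DifferentiableAt ℝ (fun y => f y t) x
  contDX : ∀ j : Fin 4, ContinuousOn (fun p : E4 × ℝ => pd j (fun y => f y p.2) p.1) (S ×ˢ I)
  diffDX : ∀ j : Fin 4, ∀ t ∈ I, ∀ x ∈ S, DifferentiableAt ℝ (pd j (fun y => f y t)) x
  contDDX : ∀ j : Fin 4, ContinuousOn (fun p : E4 × ℝ => pd j (pd j (fun y => f y p.2)) p.1) (S ×ˢ I)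
  diffT : ∀ x ∈ S, ∀ t ∈ I, DifferentiableAt ℝ (fun s => f x s) t
  contDT : ContinuousOn (fun p : E4 × ℝ => deriv (fun s => f p.1 s) p.2) (S ×ˢ I)

/-- `F` is continuous on `S × I` and continuously differentiable in `x`. -/
structure RegDrift (F : E4 → ℝ → E4) (S : Set E4) (I : Set ℝ) : Prop where
  cont : ContinuousOn (fun p : E4 × ℝ => F p.1 p.2) (S ×ˢ I)
  diffX : ∀ t ∈ I, ∀ x ∈ S, DifferentiableAt ℝ (fun y => F y t) x
  contDX : ∀ t ∈ I, ContinuousOn (fun x => fderiv ℝ (fun y => F y t) x) S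

/-- The Fokker–Planck equation `∂ₜ f + ∇·(F f) = (1/2) ∇·(σ² ∇ f)` at the point `(x, t)`. -/
def FPEq (F : E4 → ℝ → E4) (σ : Fin 4 → ℝ) (f : E4 → ℝ → ℝ) (x : E4) (t : ℝ) : Prop :=
  deriv (fun s => f x s) t + ∑ j : Fin 4, pd j (fun y => F y t j * f y t) x
    = (1 / 2) * ∑ j : Fin 4, (σ j) ^ 2 * pd j (pd j (fun y => f y t)) x

/-- The `j`-th component of the flux `H_j = (σ_j²/2) ∂_{x_j} f − F_j f`. -/
def flux (F : E4 → ℝ → E4) (σ : Fin 4 → ℝ) (f : E4 → ℝ → ℝ) (j : Fin 4) (x : E4) (t : ℝ) : ℝ :=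
  (σ j) ^ 2 / 2 * pd j (fun y => f y t) x - F x t j * f x t

/-- The no-flux boundary condition `H·n̂ = 0` on `∂Ω × (0, T_f)`: on the face of the box where
the `j`-th coordinate is extremal, the outward normal is `∓ e_j`, so `H·n̂ = 0` reads `H_j = 0`. -/
def NoFlux (a b : Fin 4 → ℝ) (Tf : ℝ) (F : E4 → ℝ → E4) (σ : Fin 4 → ℝ)
    (f : E4 → ℝ → ℝ) : Prop :=
  ∀ t ∈ Set.Ioo 0 Tf, ∀ j : Fin 4, ∀ x ∈ closure (box a b),
    (x j = a j ∨ x j = b j) → flux F σ f j x t = 0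

/-!
Multiplying the equation by `2f` and writing it in conservative form `∂ₜf = ∇·H` gives
`∂ₜ(f²) = 2∇·(fH) - 2∇f·H`. The divergence integrates to zero over the box because `fH·n̂`
vanishes on its faces, and by Young's inequality
`-2∂ⱼf Hⱼ = 2Fⱼf ∂ⱼf - σⱼ²(∂ⱼf)² ≤ σⱼ⁻² Fⱼ² f²`, so summing over `j` and using `|F| ≤ N` bounds
the integrand by `‖σ⁻¹‖₂² N² f²`. Differentiation under the integral sign is justified by the
continuity of `f ∂ₜf` on the compact set `closure Ω × [0, T_f]`.
-/

lemma two_mul_mul_sub_sq_mul_sq_le {s : ℝ} (hs : s ≠ 0) (A B : ℝ) :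
    2 * A * B - s ^ 2 * B ^ 2 ≤ s⁻¹ ^ 2 * A ^ 2 := by
  have key : 2 * A * B - s ^ 2 * B ^ 2 = s⁻¹ ^ 2 * A ^ 2 - (s * B - s⁻¹ * A) ^ 2 := by
    field_simp
    ring
  linarith [sq_nonneg (s * B - s⁻¹ * A)]

theorem hasDerivAt_setIntegral_of_continuousOn {X : Type*} [TopologicalSpace X] [T2Space X]
    [MeasurableSpace X] [OpensMeasurableSpace X] {μ : Measure X} [IsFiniteMeasureOnCompacts μ]
    {K S : Set X} (hK : IsCompact K) (hS : MeasurableSet S) (hSK : S ⊆ K)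
    {g g' : X → ℝ → ℝ} {α β t : ℝ} (ht : t ∈ Ioo α β)
    (hg : ∀ s ∈ Ioo α β, ContinuousOn (g · s) K)
    (hg' : ContinuousOn (Function.uncurry g') (K ×ˢ Icc α β))
    (hderiv : ∀ x ∈ S, ∀ s ∈ Ioo α β, HasDerivAt (g x) (g' x s) s) :
    HasDerivAt (fun s => ∫ x in S, g x s ∂μ) (∫ x in S, g' x t ∂μ) t := by
  obtain ⟨M, hM⟩ := (hK.prod isCompact_Icc).exists_bound_of_continuousOn hg'
  have hIoo : ∀ s ∈ Ioo α β, s ∈ Icc α β := fun s hs => Ioo_subset_Icc_self hs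
  refine (hasDerivAt_integral_of_dominated_loc_of_deriv_le (μ := μ.restrict S)
    (F := fun s x => g x s) (F' := fun s x => g' x s) (bound := fun _ => M)
    (isOpen_Ioo.mem_nhds ht) ?_ ?_ ?_ ?_ ?_ ?_).2
  · filter_upwards [isOpen_Ioo.mem_nhds ht] with s hs
    exact ((hg s hs).mono hSK).aestronglyMeasurable hS
  · exact ((hg t ht).integrableOn_compact hK).mono_set hSK
  · exact ((hg'.uncurry_right t (hIoo t ht)).mono hSK).aestronglyMeasurable hS
  · filter_upwards [ae_restrict_mem hS] with x hx s hs
    exact hM (x, s) ⟨hSK hx, hIoo s hs⟩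
  · exact integrableOn_const ((measure_mono hSK).trans_lt hK.measure_lt_top).ne
  · filter_upwards [ae_restrict_mem hS] with x hx s hs
    exact hderiv x hx s hs

abbrev E4.toPi : E4 ≃L[ℝ] (Fin 4 → ℝ) := EuclideanSpace.equiv (Fin 4) ℝ

open E4

section BoxGeometry

variable (a b : Fin 4 → ℝ)

lemma box_eq_preimage : box a b = toPi ⁻¹' univ.pi fun i => Ioo (a i) (b i) := by
  ext x; simp [box, Set.mem_pi]

lemma isOpen_box : IsOpen (box a b) := by
  rw [box_eq_preimage]
  exact (isOpen_set_pi finite_univ fun i _ => isOpen_Ioo).preimage toPi.continuous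

lemma closure_box (hab : ∀ i, a i < b i) : closure (box a b) = toPi ⁻¹' Icc a b := by
  rw [box_eq_preimage, ← toPi.isOpenMap.preimage_closure_eq_closure_preimage toPi.continuous,
    closure_pi_set, ← pi_univ_Icc]
  exact congrArg (toPi ⁻¹' ·) (pi_congr rfl fun i _ => closure_Ioo (hab i).ne)

lemma isCompact_closure_box : IsCompact (closure (box a b)) :=
  (toPi.toHomeomorph.isCompact_preimage.2 isCompact_Icc).closure_of_subset <| by
    rw [box_eq_preimage, ← pi_univ_Icc]
    exact preimage_mono (pi_mono fun i _ => Ioo_subset_Icc_self)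

lemma setIntegral_box (g : E4 → ℝ) :
    ∫ x in box a b, g x
      = ∫ y : Fin 4 → ℝ in univ.pi fun i => Ioo (a i) (b i), g (toPi.symm y) := by
  rw [box_eq_preimage]
  exact (PiLp.volume_preserving_ofLp (Fin 4)).setIntegral_preimage_emb
    (MeasurableEquiv.toLp 2 (Fin 4 → ℝ)).symm.measurableEmbedding (fun y => g (toPi.symm y)) _

lemma integrableOn_box_iff (g : E4 → ℝ) :
    IntegrableOn g (box a b)
      ↔ IntegrableOn (fun y : Fin 4 → ℝ => g (toPi.symm y)) (univ.pi fun i => Ioo (a i) (b i)) := by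
  rw [box_eq_preimage]
  exact (PiLp.volume_preserving_ofLp (Fin 4)).integrableOn_comp_preimage
    (MeasurableEquiv.toLp 2 (Fin 4 → ℝ)).symm.measurableEmbedding (f := fun y => g (toPi.symm y))

variable {a b}

lemma ContinuousOn.integrableOn_box {g : E4 → ℝ} (hg : ContinuousOn g (closure (box a b))) :
    IntegrableOn g (box a b) :=
  (hg.integrableOn_compact (isCompact_closure_box a b)).mono_set subset_closure

theorem integral_box_sum_pd_eq_zero (hab : ∀ i, a i < b i)
    {G : Fin 4 → E4 → ℝ} (hc : ∀ j, ContinuousOn (G j) (closure (box a b)))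
    (hd : ∀ j, ∀ x ∈ box a b, DifferentiableAt ℝ (G j) x)
    (hi : IntegrableOn (fun x => ∑ j, pd j (G j) x) (box a b))
    (hface : ∀ j, ∀ x ∈ closure (box a b), (x j = a j ∨ x j = b j) → G j x = 0) :
    ∫ x in box a b, ∑ j, pd j (G j) x = 0 := by
  have hIcc : MapsTo toPi.symm (Icc a b) (closure (box a b)) := fun y hy => by
    rwa [closure_box a b hab, mem_preimage, toPi.apply_symm_apply]
  have hIoo : MapsTo toPi.symm (univ.pi fun i => Ioo (a i) (b i)) (box a b) := fun y hy => by
    rwa [box_eq_preimage, mem_preimage, toPi.apply_symm_apply]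
  have hae : (univ.pi fun i => Ioo (a i) (b i)) =ᵐ[volume] Icc a b :=
    Measure.univ_pi_Ioo_ae_eq_Icc
  have hi' := ((integrableOn_box_iff a b _).1 hi).congr_set_ae hae.symm
  rw [setIntegral_box, setIntegral_congr_set hae]
  refine (integral_divergence_of_hasFDerivAt_off_countable' a b (fun i => (hab i).le)
    (fun j y => G j (toPi.symm y))
    (fun j y => (fderiv ℝ (G j) (toPi.symm y)).comp toPi.symm.toContinuousLinearMap)
    ∅ countable_empty (fun j => (hc j).comp toPi.symm.continuous.continuousOn hIcc)
    (fun y hy j => (hd j _ (hIoo hy.1)).hasFDerivAt.comp y toPi.symm.hasFDerivAt) hi').trans ?_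
  refine Finset.sum_eq_zero fun j _ => ?_
  have hface' : ∀ c ∈ ({a j, b j} : Set ℝ), ∀ y ∈ Icc (a ∘ j.succAbove) (b ∘ j.succAbove),
      G j (toPi.symm (j.insertNth (α := fun _ => ℝ) c y)) = 0 := by
    rintro c hc y hy
    refine hface j _ (hIcc (Fin.insertNth_mem_Icc.2 ⟨?_, hy⟩)) ?_
    · rcases hc with rfl | rfl
      exacts [⟨le_rfl, (hab j).le⟩, ⟨(hab j).le, le_rfl⟩]
    · simpa using hc
  rw [setIntegral_congr_fun measurableSet_Icc (hface' _ (by simp)),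
    setIntegral_congr_fun measurableSet_Icc (hface' _ (by simp))]
  simp

end BoxGeometry

section PartialDerivative

variable (j : Fin 4) {g h : E4 → ℝ} {x : E4}

lemma pd_mul (hg : DifferentiableAt ℝ g x) (hh : DifferentiableAt ℝ h x) :
    pd j (fun y => g y * h y) x = pd j g x * h x + g x * pd j h x := by
  simp only [pd, fderiv_fun_mul hg hh, add_apply, smul_apply, smul_eq_mul]
  ring

lemma pd_sub (hg : DifferentiableAt ℝ g x) (hh : DifferentiableAt ℝ h x) :
    pd j (fun y => g y - h y) x = pd j g x - pd j h x := by
  simp [pd, fderiv_fun_sub hg hh]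

lemma pd_const_mul (c : ℝ) (hg : DifferentiableAt ℝ g x) :
    pd j (fun y => c * g y) x = c * pd j g x := by
  simp [pd, fderiv_const_mul hg c]

end PartialDerivative

section FokkerPlanck

variable {S : Set E4} {I : Set ℝ} {t : ℝ} {x : E4}
  {F : E4 → ℝ → E4} {σ : Fin 4 → ℝ} {f : E4 → ℝ → ℝ}

lemma RegSol.continuousOn_slice (hf : RegSol f S I) (ht : t ∈ I) :
    ContinuousOn (fun x => f x t) S :=
  hf.contF.uncurry_right t ht

lemma RegSol.continuousOn_pd_slice (hf : RegSol f S I) (ht : t ∈ I) (j : Fin 4) :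
    ContinuousOn (pd j fun y => f y t) S :=
  (hf.contDX j).uncurry_right (f := fun x s => pd j (fun y => f y s) x) t ht

lemma RegSol.continuousOn_deriv_slice (hf : RegSol f S I) (ht : t ∈ I) :
    ContinuousOn (fun x => deriv (fun s => f x s) t) S :=
  hf.contDT.uncurry_right (f := fun x s => deriv (fun r => f x r) s) t ht

lemma RegDrift.continuousOn_slice_apply (hF : RegDrift F S I) (ht : t ∈ I) (j : Fin 4) :
    ContinuousOn (fun x => F x t j) S :=
  (EuclideanSpace.proj j).continuous.comp_continuousOn (hF.cont.uncurry_right t ht)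

lemma RegDrift.differentiableAt_slice_apply (hF : RegDrift F S I) (ht : t ∈ I) (j : Fin 4)
    (hx : x ∈ S) : DifferentiableAt ℝ (fun y => F y t j) x :=
  (EuclideanSpace.proj (𝕜 := ℝ) j).differentiableAt.comp x (hF.diffX t ht x hx)

lemma continuousOn_flux (hF : RegDrift F S I) (hf : RegSol f S I) (ht : t ∈ I) (j : Fin 4) :
    ContinuousOn (fun x => flux F σ f j x t) S :=
  (continuousOn_const.mul (hf.continuousOn_pd_slice ht j)).sub
    ((hF.continuousOn_slice_apply ht j).mul (hf.continuousOn_slice ht))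

lemma differentiableAt_flux (hF : RegDrift F S I) (hf : RegSol f S I) (ht : t ∈ I) (j : Fin 4)
    (hx : x ∈ S) : DifferentiableAt ℝ (fun y => flux F σ f j y t) x :=
  ((hf.diffDX j t ht x hx).const_mul _).sub
    ((hF.differentiableAt_slice_apply ht j hx).fun_mul (hf.diffX t ht x hx))

lemma pd_flux (hF : RegDrift F S I) (hf : RegSol f S I) (ht : t ∈ I) (j : Fin 4) (hx : x ∈ S) :
    pd j (fun y => flux F σ f j y t) x
      = σ j ^ 2 / 2 * pd j (pd j fun y => f y t) x - pd j (fun y => F y t j * f y t) x := by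
  unfold flux
  rw [pd_sub j ((hf.diffDX j t ht x hx).const_mul _)
      ((hF.differentiableAt_slice_apply ht j hx).fun_mul (hf.diffX t ht x hx)),
    pd_const_mul j _ (hf.diffDX j t ht x hx)]

lemma FPEq.deriv_eq_sum_pd_flux (h : FPEq F σ f x t) (hF : RegDrift F S I) (hf : RegSol f S I)
    (ht : t ∈ I) (hx : x ∈ S) :
    deriv (fun s => f x s) t = ∑ j, pd j (fun y => flux F σ f j y t) x := by
  rw [Finset.sum_congr rfl fun j _ => pd_flux hF hf ht j hx, Finset.sum_sub_distrib,
    eq_sub_iff_add_eq, h, Finset.mul_sum]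
  exact Finset.sum_congr rfl fun j _ => by ring

lemma FPEq.two_mul_mul_deriv_eq (h : FPEq F σ f x t) (hF : RegDrift F S I) (hf : RegSol f S I)
    (ht : t ∈ I) (hx : x ∈ S) :
    2 * f x t * deriv (fun s => f x s) t
      = 2 * ∑ j, pd j (fun y => f y t * flux F σ f j y t) x
        - 2 * ∑ j, pd j (fun y => f y t) x * flux F σ f j x t := by
  rw [h.deriv_eq_sum_pd_flux hF hf ht hx, Finset.mul_sum, Finset.mul_sum, Finset.mul_sum,
    ← Finset.sum_sub_distrib]
  refine Finset.sum_congr rfl fun j _ => ?_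
  rw [pd_mul j (hf.diffX t ht x hx) (differentiableAt_flux hF hf ht j hx)]
  ring

lemma neg_two_mul_sum_pd_mul_flux_le (hσ : ∀ j, 0 < σ j) {N : ℝ} (hFN : ‖F x t‖ ≤ N) :
    -2 * ∑ j, pd j (fun y => f y t) x * flux F σ f j x t
      ≤ (⨆ j, (σ j)⁻¹) ^ 2 * N ^ 2 * f x t ^ 2 := by
  set M := ⨆ j, (σ j)⁻¹
  have hterm : ∀ j, -2 * (pd j (fun y => f y t) x * flux F σ f j x t)
      ≤ M ^ 2 * (F x t j ^ 2 * f x t ^ 2) := by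
    intro j
    have hM : (σ j)⁻¹ ^ 2 ≤ M ^ 2 := pow_le_pow_left₀ (inv_pos.2 (hσ j)).le
      (le_ciSup (f := fun j => (σ j)⁻¹) (finite_range _).bddAbove j) 2
    have := two_mul_mul_sub_sq_mul_sq_le (hσ j).ne' (F x t j * f x t) (pd j (fun y => f y t) x)
    unfold flux
    nlinarith [mul_le_mul_of_nonneg_right hM (sq_nonneg (F x t j * f x t))]
  calc -2 * ∑ j, pd j (fun y => f y t) x * flux F σ f j x t
      ≤ ∑ j, M ^ 2 * (F x t j ^ 2 * f x t ^ 2) := by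
        rw [Finset.mul_sum]; exact Finset.sum_le_sum fun j _ => hterm j
    _ = M ^ 2 * ‖F x t‖ ^ 2 * f x t ^ 2 := by
        rw [EuclideanSpace.real_norm_sq_eq, ← Finset.mul_sum, ← Finset.sum_mul]; ring
    _ ≤ M ^ 2 * N ^ 2 * f x t ^ 2 := by gcongr

lemma continuousOn_sum_pd_mul_flux (hF : RegDrift F S I) (hf : RegSol f S I) (ht : t ∈ I) :
    ContinuousOn (fun x => ∑ j, pd j (fun y => f y t) x * flux F σ f j x t) S :=
  continuousOn_finsetSum _ fun j _ =>
    (hf.continuousOn_pd_slice ht j).mul (continuousOn_flux hF hf ht j)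

theorem integral_two_mul_mul_deriv_eq {a b : Fin 4 → ℝ} (hab : ∀ i, a i < b i)
    (hF : RegDrift F (closure (box a b)) I) (hf : RegSol f (closure (box a b)) I) (ht : t ∈ I)
    (hFP : ∀ x ∈ box a b, FPEq F σ f x t)
    (hBC : ∀ j, ∀ x ∈ closure (box a b), (x j = a j ∨ x j = b j) → flux F σ f j x t = 0) :
    ∫ x in box a b, 2 * f x t * deriv (fun s => f x s) t
      = -2 * ∫ x in box a b, ∑ j, pd j (fun y => f y t) x * flux F σ f j x t := by
  set D := fun x => ∑ j, pd j (fun y => f y t * flux F σ f j y t) x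
  set P := fun x => ∑ j, pd j (fun y => f y t) x * flux F σ f j x t
  have hmeas : MeasurableSet (box a b) := (isOpen_box a b).measurableSet
  have hid : EqOn (fun x => 2 * f x t * deriv (fun s => f x s) t) (fun x => 2 * D x - 2 * P x)
      (box a b) := fun x hx => (hFP x hx).two_mul_mul_deriv_eq hF hf ht (subset_closure hx)
  have hP : IntegrableOn P (box a b) := (continuousOn_sum_pd_mul_flux hF hf ht).integrableOn_box
  have hL : IntegrableOn (fun x => 2 * f x t * deriv (fun s => f x s) t) (box a b) :=
    ((continuousOn_const.mul (hf.continuousOn_slice ht)).mul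
      (hf.continuousOn_deriv_slice ht)).integrableOn_box
  have hD : IntegrableOn D (box a b) := by
    have h : IntegrableOn (fun x => (2 * f x t * deriv (fun s => f x s) t + 2 * P x) / 2)
        (box a b) := (hL.add (hP.const_mul 2)).div_const 2
    exact h.congr_fun (fun x hx => by simp only [hid hx]; ring) hmeas
  have hD0 : ∫ x in box a b, D x = 0 :=
    integral_box_sum_pd_eq_zero hab
      (fun j => (hf.continuousOn_slice ht).mul (continuousOn_flux hF hf ht j))
      (fun j x hx => (hf.diffX t ht x (subset_closure hx)).fun_mul
        (differentiableAt_flux hF hf ht j (subset_closure hx)))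
      hD (fun j x hx hxj => by rw [hBC j x hx hxj, mul_zero])
  rw [setIntegral_congr_fun hmeas hid, integral_sub (hD.const_mul 2) (hP.const_mul 2),
    integral_const_mul, integral_const_mul, hD0]
  ring

end FokkerPlanck

theorem fokkerPlanck_energy_differential_inequality_general
    (a b : Fin 4 → ℝ) (hab : ∀ i, a i < b i)
    (Tf : ℝ)
    (σ : Fin 4 → ℝ) (hσ : ∀ j, 0 < σ j)
    (F : E4 → ℝ → E4) (hF : RegDrift F (closure (box a b)) (Set.Icc 0 Tf))
    (f : E4 → ℝ → ℝ) (hreg : RegSol f (closure (box a b)) (Set.Icc 0 Tf))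
    (hFP : ∀ x ∈ box a b, ∀ t ∈ Set.Ioo 0 Tf, FPEq F σ f x t)
    (hBC : NoFlux a b Tf F σ f)
    (N : ℝ) (hN : ∀ x ∈ box a b, ∀ t ∈ Set.Ioo 0 Tf, ‖F x t‖ ≤ N) :
    ∀ t ∈ Set.Ioo 0 Tf, ∃ d : ℝ,
      HasDerivAt (fun s => ∫ x in box a b, (f x s) ^ 2) d t ∧
      d ≤ (⨆ j : Fin 4, (σ j)⁻¹) ^ 2 * N ^ 2 * ∫ x in box a b, (f x t) ^ 2 := by
  intro t ht
  have hIcc : Ioo 0 Tf ⊆ Icc 0 Tf := Ioo_subset_Icc_self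
  have hmeas : MeasurableSet (box a b) := (isOpen_box a b).measurableSet
  have hderiv := hasDerivAt_setIntegral_of_continuousOn (μ := volume) (isCompact_closure_box a b)
    hmeas subset_closure ht (g := fun x s => f x s ^ 2)
    (g' := fun x s => 2 * f x s * deriv (fun r => f x r) s)
    (fun s hs => (hreg.continuousOn_slice (hIcc hs)).pow 2)
    ((continuousOn_const.fun_mul hreg.contF).fun_mul hreg.contDT)
    (fun x hx s hs => by
      simpa using (hreg.diffT x (subset_closure hx) s (hIcc hs)).hasDerivAt.fun_pow 2)
  refine ⟨_, hderiv, ?_⟩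
  rw [integral_two_mul_mul_deriv_eq hab hF hreg (hIcc ht) (fun x hx => hFP x hx t ht) (hBC t ht),
    ← integral_const_mul, ← integral_const_mul]
  exact setIntegral_mono_on
    (((continuousOn_sum_pd_mul_flux hF hreg (hIcc ht)).integrableOn_box).const_mul _)
    (((hreg.continuousOn_slice (hIcc ht)).pow 2).integrableOn_box.const_mul _) hmeas
    fun x hx => neg_two_mul_sum_pd_mul_flux_le hσ (hN x hx t ht)

/-- **Differential inequality for the squared `L²` norm.**
If `f` is a classical solution of the Fokker–Planck equation on `Q = Ω × (0, T_f)` with no-flux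
boundary conditions and the drift satisfies `|F(x,t)| ≤ N` on `Ω × (0, T_f)`, then
`(d/dt) ‖f(·,t)‖²_{L²(Ω)} ≤ ‖σ⁻¹‖₂² N² ‖f(·,t)‖²_{L²(Ω)}` for all `t ∈ (0, T_f)`,
where `‖σ⁻¹‖₂ = max_j σ_j⁻¹`. -/
theorem fokkerPlanck_energy_differential_inequality
    (a b : Fin 4 → ℝ) (hab : ∀ i, a i < b i)
    (Tf : ℝ) (hTf : 0 < Tf)
    (σ : Fin 4 → ℝ) (hσ : ∀ j, 0 < σ j)
    (F : E4 → ℝ → E4) (hF : RegDrift F (closure (box a b)) (Set.Icc 0 Tf))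
    (f : E4 → ℝ → ℝ) (hreg : RegSol f (closure (box a b)) (Set.Icc 0 Tf))
    (hFP : ∀ x ∈ box a b, ∀ t ∈ Set.Ioo 0 Tf, FPEq F σ f x t)
    (hBC : NoFlux a b Tf F σ f)
    (N : ℝ) (hN : ∀ x ∈ box a b, ∀ t ∈ Set.Ioo 0 Tf, ‖F x t‖ ≤ N) :
    ∀ t ∈ Set.Ioo 0 Tf, ∃ d : ℝ,
      HasDerivAt (fun s => ∫ x in box a b, (f x s) ^ 2) d t ∧
      d ≤ (⨆ j : Fin 4, (σ j)⁻¹) ^ 2 * N ^ 2 * ∫ x in box a b, (f x t) ^ 2 :=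
  fokkerPlanck_energy_differential_inequality_general a b hab Tf σ hσ F hF f hreg hFP hBC N hN
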